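/- arXiv:2207.13484 — 2 statements merged into one kernel-verified Lean document; each statement's English description precedes it below -/
import Mathlib

section
/- Let B be a C*-algebra, X a right Hilbert C*-module over B, π : B → 𝓛(V) a representation of B on a Hilbert space V. Define on the algebraic tensor product X ⊗ V the sesquilinear form (x ⊗ v, x' ⊗ v') := ⟨v, π(⟨x,x'⟩_B)v'⟩_V. Then this form is positive semidefinite: for any finite sum ξ = Σᵢ xᵢ ⊗ vᵢ, one has (ξ, ξ) ≥ 0. -/
/-!
The Gram matrix `G = (⟨xᵢ, xⱼ⟩)` satisfies `∑ bᵢ* Gᵢⱼ bⱼ = ⟨∑ xᵢ bᵢ, ∑ xⱼ bⱼ⟩ ≥ 0` for every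
`b ∈ Bⁿ`, and this forces `G ≥ 0` in the C*-algebra `Mₙ(B)`: testing it on the columns of
`√(G⁻)` shows that `-(G⁻)²` has nonnegative diagonal, so `G⁻ = 0`. Writing `G = S* S`, the form
becomes `∑ₖ ‖∑ⱼ π(Sₖⱼ) vⱼ‖² ≥ 0`.
-/

open scoped ComplexOrder

lemma inner_map_star_mul_apply {A V : Type*} [NonUnitalNonAssocSemiring A] [DistribMulAction ℂ A]
    [StarRing A] [NormedAddCommGroup V] [InnerProductSpace ℂ V] [CompleteSpace V]
    (π : A →⋆ₙₐ[ℂ] (V →L[ℂ] V)) (a b : A) (v w : V) :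
    inner ℂ v (π (star a * b) w) = inner ℂ (π a v) (π b w) := by
  rw [map_mul, map_star, mul_apply_eq_comp, ContinuousLinearMap.star_eq_adjoint,
    ContinuousLinearMap.adjoint_inner_right]

namespace CStarMatrix

section StarRing

variable {A : Type*} [NonUnitalSemiring A] [StarRing A] {n : Type*} [Fintype n]

lemma star_mul_mul_apply_self (C T : CStarMatrix n n A) (k : n) :
    (star C * T * C) k k = ∑ i, ∑ j, star (C i k) * T i j * C j k := by
  simp only [mul_apply, star_apply, Finset.sum_mul]
  exact Finset.sum_comm

end StarRing

section NonUnital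

variable {A : Type*} [NonUnitalCStarAlgebra A] [PartialOrder A] [StarOrderedRing A]
  {n : Type*} [Fintype n]

lemma eq_zero_of_mul_self_apply_self_nonpos {D : CStarMatrix n n A} (hD : IsSelfAdjoint D)
    (h : ∀ k, (D * D) k k ≤ 0) : D = 0 := by
  refine ext fun j k ↦ ?_
  have hsum : ∑ j, star (D j k) * D j k = 0 := by
    refine le_antisymm ?_ (Finset.sum_nonneg fun j _ ↦ star_mul_self_nonneg _)
    simpa only [mul_apply, star_apply_of_isSelfAdjoint hD] using h k
  have hjk := (Finset.sum_eq_zero_iff_of_nonneg fun j _ ↦ star_mul_self_nonneg (D j k)).mp hsum j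
    (Finset.mem_univ j)
  exact CStarRing.star_mul_self_eq_zero_iff _ |>.mp hjk

theorem sum_inner_map_apply_nonneg {V : Type*} [NormedAddCommGroup V] [InnerProductSpace ℂ V]
    [CompleteSpace V] (π : A →⋆ₙₐ[ℂ] (V →L[ℂ] V)) {T : CStarMatrix n n A} (hT : 0 ≤ T)
    (v : n → V) : 0 ≤ ∑ i, ∑ j, inner ℂ (v i) (π (T i j) (v j)) := by
  replace hT := StarOrderedRing.nonneg_iff.mp hT
  induction hT using AddSubmonoid.closure_induction with
  | mem _ hS =>
    obtain ⟨S, rfl⟩ := hS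
    have hsum : ∑ i, ∑ j, inner ℂ (v i) (π ((star S * S) i j) (v j))
        = ∑ k, inner ℂ (∑ i, π (S k i) (v i)) (∑ j, π (S k j) (v j)) := by
      simp only [mul_apply, star_apply, map_sum, FunLike.coe_sum, Finset.sum_apply,
        inner_sum, sum_inner, inner_map_star_mul_apply]
      exact Finset.sum_comm.trans (Finset.sum_congr rfl fun _ _ ↦ Finset.sum_comm) |>.trans
        Finset.sum_comm
    rw [hsum]
    refine Finset.sum_nonneg fun k _ ↦ ?_
    rw [← inner_self_ofReal_re, RCLike.ofReal_nonneg]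
    exact inner_self_nonneg
  | zero => simp
  | add M N _ _ hM hN =>
    simp only [add_apply, map_add, _root_.add_apply, inner_add_right,
      Finset.sum_add_distrib]
    exact add_nonneg hM hN

end NonUnital

variable {A : Type*} [CStarAlgebra A] [PartialOrder A] [StarOrderedRing A] {n : Type*} [Fintype n]

theorem nonneg_of_forall_sum_star_mul_mul_nonneg [DecidableEq n] {T : CStarMatrix n n A}
    (hT : IsSelfAdjoint T) (h : ∀ b : n → A, 0 ≤ ∑ i, ∑ j, star (b i) * T i j * b j) : 0 ≤ T := by
  -- Instance search misses this, as the two `ℝ`-algebra structures on `CStarMatrix n n A`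
  -- agree only after unfolding.
  let _ : ContinuousFunctionalCalculus ℝ (CStarMatrix n n A) IsSelfAdjoint :=
    IsSelfAdjoint.instContinuousFunctionalCalculus
  have hT_add : T + cfc (fun t : ℝ ↦ max (-t) 0) T = cfc (fun t : ℝ ↦ max t 0) T := by
    nth_rewrite 1 [← cfc_id' ℝ T]
    rw [← cfc_add ..]
    refine cfc_congr fun t _ ↦ ?_
    rcases le_total t 0 with ht | ht <;> simp [ht]
  have hT_neg : star (cfc (fun t : ℝ ↦ √(max (-t) 0)) T) * T * cfc (fun t : ℝ ↦ √(max (-t) 0)) T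
      = -(cfc (fun t : ℝ ↦ max (-t) 0) T * cfc (fun t : ℝ ↦ max (-t) 0) T) := by
    rw [(cfc_predicate _ _ : IsSelfAdjoint (cfc _ T)).star_eq]
    nth_rewrite 2 [← cfc_id' ℝ T]
    rw [← cfc_mul .., ← cfc_mul .., ← cfc_mul .., ← cfc_neg]
    refine cfc_congr fun t _ ↦ ?_
    have hm := Real.mul_self_sqrt (le_max_right (-t) 0)
    rcases le_total t 0 with ht | ht
    · rw [max_eq_left (by linarith)] at hm ⊢
      linear_combination t * hm
    · simp [max_eq_right (neg_nonpos.mpr ht)]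
  have hT_negPart : cfc (fun t : ℝ ↦ max (-t) 0) T = 0 :=
    eq_zero_of_mul_self_apply_self_nonpos (cfc_predicate _ _) fun k ↦ by
      simpa [← star_mul_mul_apply_self, hT_neg] using
        h fun i ↦ cfc (fun t : ℝ ↦ √(max (-t) 0)) T i k
  rw [hT_negPart, add_zero] at hT_add
  rw [hT_add]
  exact cfc_nonneg fun t _ ↦ le_max_right t 0

end CStarMatrix

theorem sum_star_mul_inner_mul_eq_inner_sum {B X : Type*} [NonUnitalRing B] [StarRing B]
    [AddCommMonoid X] (rsmul : X → B → X) (ip : X → X → B)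
    (hip_addl : ∀ x y z, ip (x + y) z = ip x z + ip y z)
    (hip_addr : ∀ x y z, ip x (y + z) = ip x y + ip x z)
    (hip_star : ∀ x y, star (ip x y) = ip y x)
    (hip_mod : ∀ x y b, ip x (rsmul y b) = ip x y * b)
    {n : Type*} [Fintype n] (x : n → X) (b : n → B) :
    ∑ i, ∑ j, star (b i) * ip (x i) (x j) * b j
      = ip (∑ i, rsmul (x i) (b i)) (∑ j, rsmul (x j) (b j)) := by
  have hip_rsmul : ∀ y c z, ip (rsmul y c) z = star c * ip y z := fun y c z ↦ by
    rw [← hip_star, hip_mod, star_mul, hip_star]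
  have ip_sum_left : ∀ (y : n → X) z, ip (∑ i, y i) z = ∑ i, ip (y i) z := fun y z ↦
    map_sum (AddMonoidHom.mk' (ip · z) (hip_addl · · z)) y _
  have ip_sum_right : ∀ z (y : n → X), ip z (∑ j, y j) = ∑ j, ip z (y j) := fun z y ↦
    map_sum (AddMonoidHom.mk' (ip z) (hip_addr z)) y _
  simp only [ip_sum_left, ip_sum_right, hip_rsmul, hip_mod, mul_assoc]

open CStarMatrix in
theorem stmt2_general
    {B X V : Type*}
    [NormedRing B] [StarRing B] [CStarRing B] [NormedAlgebra ℂ B] [CompleteSpace B]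
    [StarModule ℂ B] [PartialOrder B] [StarOrderedRing B]
    [AddCommGroup X]
    [NormedAddCommGroup V] [InnerProductSpace ℂ V] [CompleteSpace V]
    -- right Hilbert C*-module structure on X over B
    (rsmul : X → B → X)
    (ip : X → X → B)
    (hip_addl : ∀ x y z, ip (x + y) z = ip x z + ip y z)
    (hip_addr : ∀ x y z, ip x (y + z) = ip x y + ip x z)
    (hip_star : ∀ x y, star (ip x y) = ip y x)
    (hip_mod : ∀ x y b, ip x (rsmul y b) = ip x y * b)
    (hip_pos : ∀ x, 0 ≤ ip x x)
    -- a representation of B on V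
    (π : B →⋆ₙₐ[ℂ] (V →L[ℂ] V)) :
    ∀ (n : ℕ) (x : Fin n → X) (v : Fin n → V),
      0 ≤ ∑ i : Fin n, ∑ j : Fin n,
        (inner ℂ (v i) (π (ip (x i) (x j)) (v j)) : ℂ) := by
  let _ : CStarAlgebra B := { }
  intro n x v
  let G : CStarMatrix (Fin n) (Fin n) B := ofMatrix (.of fun i j ↦ ip (x i) (x j))
  have hG_sa : IsSelfAdjoint G := ext fun i j ↦ hip_star (x j) (x i)
  have hG : 0 ≤ G := nonneg_of_forall_sum_star_mul_mul_nonneg hG_sa fun b ↦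
    (hip_pos _).trans_eq
      (sum_star_mul_inner_mul_eq_inner_sum rsmul ip hip_addl hip_addr hip_star hip_mod x b).symm
  exact sum_inner_map_apply_nonneg π hG v

/-- Positivity of the interior tensor product form. For a right Hilbert
C*-module `X` over `B` and a representation `π` of `B` on a Hilbert space `V`, the form
`(x ⊗ v, x' ⊗ v') := ⟨v, π(⟨x,x'⟩_B) v'⟩` is positive semidefinite on finite sums. -/
theorem stmt2
    {B X V : Type*}
    [NormedRing B] [StarRing B] [CStarRing B] [NormedAlgebra ℂ B] [CompleteSpace B]
    [StarModule ℂ B] [PartialOrder B] [StarOrderedRing B]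
    [AddCommGroup X] [Module ℂ X]
    [NormedAddCommGroup V] [InnerProductSpace ℂ V] [CompleteSpace V]
    -- right Hilbert C*-module structure on X over B
    (rsmul : X → B → X)
    (hr_addl : ∀ x y b, rsmul (x + y) b = rsmul x b + rsmul y b)
    (hr_mul : ∀ x b b', rsmul x (b * b') = rsmul (rsmul x b) b')
    (ip : X → X → B)
    (hip_addl : ∀ x y z, ip (x + y) z = ip x z + ip y z)
    (hip_addr : ∀ x y z, ip x (y + z) = ip x y + ip x z)
    (hip_smul : ∀ (c : ℂ) (x y : X), ip x (c • y) = c • ip x y)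
    (hip_star : ∀ x y, star (ip x y) = ip y x)
    (hip_mod : ∀ x y b, ip x (rsmul y b) = ip x y * b)
    (hip_pos : ∀ x, 0 ≤ ip x x)
    (hip_nondeg : ∀ x, ip x x = 0 → x = 0)
    -- a representation of B on V
    (π : B →⋆ₙₐ[ℂ] (V →L[ℂ] V)) :
    ∀ (n : ℕ) (x : Fin n → X) (v : Fin n → V),
      0 ≤ ∑ i : Fin n, ∑ j : Fin n,
        (inner ℂ (v i) (π (ip (x i) (x j)) (v j)) : ℂ) :=
  stmt2_general rsmul ip hip_addl hip_addr hip_star hip_mod hip_pos π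
end

section
/- Let G and H be unimodular locally compact groups with commuting unitary representations on a Hilbert space V_ω, and let Θ be the completion of a dense invariant subspace 𝕊 ⊆ V_ω as a right Hilbert C*-module over C*_r(H) with inner product ⟨x,y⟩_H(h) = ⟨x, ω(h)y⟩. Then the map 𝕊 ⊗ C_c(H) → 𝕊, x ⊗ f ↦ x·f := ∫_H f(h)ω(h⁻¹)x dh, is isometric with respect to the interior tensor product form arising from the left regular representation ρ of H on L²(H): ⟨x·f, y·g⟩_{V_ω} = ⟨f, ρ(⟨x,y⟩_H)g⟩_{L²(H)} for all x, y ∈ 𝕊 and f, g ∈ C_c(H). -/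
/-!
Unitarity turns `⟨ω(s⁻¹)x, ω(t⁻¹)y⟩` into the matrix coefficient `⟨x, ω(st⁻¹)y⟩`. Pulling
both Bochner integrals out of the inner product therefore gives
`⟨x·f, y·g⟩ = ∫ₛ conj (f s) ∫ₜ g t ⟨x, ω(st⁻¹)y⟩`, and the substitution `t ↦ s t⁻¹`, which
preserves a left and inversion invariant measure, turns the inner integral into the
convolution `(⟨x,y⟩_H ∗ g)(s)`.
-/

open MeasureTheory
open scoped ComplexConjugate

theorem integral_inner_left {α E : Type*} [MeasurableSpace α] {μ : Measure α}
    [NormedAddCommGroup E] [InnerProductSpace ℂ E] [CompleteSpace E]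
    {F : α → E} (hF : Integrable F μ) (c : E) :
    inner ℂ (∫ a, F a ∂μ) c = ∫ a, inner ℂ (F a) c ∂μ := by
  rw [← inner_conj_symm, ← integral_inner hF, ← integral_conj]
  simp_rw [inner_conj_symm]

theorem integral_mul_apply_inv_mul_eq {G 𝕜 : Type*} [Group G] [MeasurableSpace G]
    [MeasurableMul G] [MeasurableInv G] [NormedRing 𝕜] [NormedSpace ℝ 𝕜]
    (μ : Measure G) [μ.IsMulLeftInvariant] [μ.IsInvInvariant] (k g : G → 𝕜) (s : G) :
    ∫ t, k t * g (t⁻¹ * s) ∂μ = ∫ t, k (s * t⁻¹) * g t ∂μ := by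
  rw [← integral_div_left_eq_self _ μ s]
  simp_rw [div_eq_mul_inv, mul_inv_rev, inv_inv, inv_mul_cancel_right]

section Representation

variable {H V : Type*} [Group H] [NormedAddCommGroup V] [InnerProductSpace ℂ V]
  {ω : H → V →L[ℂ] V}

theorem inner_apply_inv_apply_inv (hω_mul : ∀ g h : H, ω (g * h) = (ω g).comp (ω h))
    (hω_one : ω 1 = ContinuousLinearMap.id ℂ V)
    (hω_unitary : ∀ (h : H) (v w : V), inner ℂ (ω h v) (ω h w) = inner ℂ v w)
    (s t : H) (x y : V) :
    inner ℂ (ω s⁻¹ x) (ω t⁻¹ y) = inner ℂ x (ω (s * t⁻¹) y) := by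
  rw [← hω_unitary s, ← ContinuousLinearMap.comp_apply, ← ContinuousLinearMap.comp_apply,
    ← hω_mul, ← hω_mul, mul_inv_cancel, hω_one, ContinuousLinearMap.id_apply]

theorem integrable_smul_apply_inv [MeasurableSpace H] [MeasurableInv H] {μ : Measure H}
    [μ.IsInvInvariant] (hω_norm : ∀ (h : H) (v : V), ‖ω h v‖ = ‖v‖) {x : V}
    (hx : AEStronglyMeasurable (fun s => ω s x) μ) {φ : H → ℂ} (hφ : Integrable φ μ) :
    Integrable (fun h => φ h • ω h⁻¹ x) μ := by
  refine (hφ.norm.mul_const ‖x‖).mono'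
    (hφ.aestronglyMeasurable.smul (hx.comp_measurePreserving (Measure.measurePreserving_inv μ)))
    (.of_forall fun h => ?_)
  simp [norm_smul, hω_norm]

end Representation

theorem stmt15_general
    {H V : Type*} [Group H] [TopologicalSpace H] [MeasurableSpace H] [BorelSpace H]
    [IsTopologicalGroup H]
    [NormedAddCommGroup V] [InnerProductSpace ℂ V] [CompleteSpace V]
    (μ : Measure H) [μ.IsMulLeftInvariant] [μ.IsInvInvariant]
    [IsFiniteMeasureOnCompacts μ]
    -- commuting unitary representations: here only the H-action ω is needed
    (ω : H → (V →L[ℂ] V))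
    (hω_mul : ∀ g h : H, ω (g * h) = (ω g).comp (ω h))
    (hω_one : ω 1 = ContinuousLinearMap.id ℂ V)
    (hω_unitary : ∀ (h : H) (v w : V), (inner ℂ (ω h v) (ω h w) : ℂ) = inner ℂ v w)
    -- the dense invariant subspace 𝕊
    (S : Submodule ℂ V)
    (hS_meas : ∀ x ∈ S, AEStronglyMeasurable (fun s : H => ω s x) μ) :
    ∀ x ∈ S, ∀ y ∈ S, ∀ f g : H → ℂ,
      Continuous f → HasCompactSupport f → Continuous g → HasCompactSupport g →
      (inner ℂ (∫ h, f h • (ω h⁻¹ x) ∂μ) (∫ h, g h • (ω h⁻¹ y) ∂μ) : ℂ)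
        = ∫ s, conj (f s) * (∫ t, (inner ℂ x (ω t y) : ℂ) * g (t⁻¹ * s) ∂μ) ∂μ := by
  intro x hx y hy f g hf hfc hg hgc
  have hω_norm (h : H) : ∀ v, ‖ω h v‖ = ‖v‖ :=
    (LinearMap.norm_map_iff_inner_map_map (ω h)).2 (hω_unitary h)
  have hxf := integrable_smul_apply_inv hω_norm (hS_meas x hx)
    (hf.integrable_of_hasCompactSupport hfc)
  have hyg := integrable_smul_apply_inv hω_norm (hS_meas y hy)
    (hg.integrable_of_hasCompactSupport hgc)
  rw [integral_inner_left hxf]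
  refine integral_congr_ae (.of_forall fun s => ?_)
  dsimp only
  rw [inner_smul_left, ← integral_inner hyg, integral_mul_apply_inv_mul_eq μ]
  congr 1
  refine integral_congr_ae (.of_forall fun t => ?_)
  simp only [inner_smul_right, inner_apply_inv_apply_inv hω_mul hω_one hω_unitary, mul_comm]

/-- The map `x ⊗ f ↦ x·f = ∫_H f(h) ω(h⁻¹)x dh` is isometric from the
interior tensor product (over the left regular representation `ρ` of `H` on `L²(H)`) to
the representation space: `⟨x·f, y·g⟩ = ⟨f, ρ(⟨x,y⟩_H) g⟩_{L²(H)}`, where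
`⟨x,y⟩_H(h) = ⟨x, ω(h)y⟩` and `ρ(k)g = k ∗ g`. -/
theorem stmt15
    {H V : Type*} [Group H] [TopologicalSpace H] [MeasurableSpace H] [BorelSpace H]
    [IsTopologicalGroup H] [LocallyCompactSpace H]
    [NormedAddCommGroup V] [InnerProductSpace ℂ V] [CompleteSpace V]
    (μ : Measure H) [μ.IsMulLeftInvariant] [μ.IsMulRightInvariant] [μ.IsInvInvariant]
    [IsFiniteMeasureOnCompacts μ]
    -- commuting unitary representations: here only the H-action ω is needed
    (ω : H → (V →L[ℂ] V))
    (hω_mul : ∀ g h : H, ω (g * h) = (ω g).comp (ω h))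
    (hω_one : ω 1 = ContinuousLinearMap.id ℂ V)
    (hω_unitary : ∀ (h : H) (v w : V), (inner ℂ (ω h v) (ω h w) : ℂ) = inner ℂ v w)
    -- the dense invariant subspace 𝕊
    (S : Submodule ℂ V) (hS_dense : Dense (S : Set V))
    (hS_inv : ∀ h : H, ∀ x ∈ S, ω h x ∈ S)
    (hS_meas : ∀ x ∈ S, AEStronglyMeasurable (fun s : H => ω s x) μ)
    -- matrix coefficients lie in L¹ ∩ L²
    (hL1 : ∀ x ∈ S, ∀ y ∈ S, Integrable (fun h : H => (inner ℂ x (ω h y) : ℂ)) μ)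
    (hL2 : ∀ x ∈ S, ∀ y ∈ S, MemLp (fun h : H => (inner ℂ x (ω h y) : ℂ)) 2 μ) :
    ∀ x ∈ S, ∀ y ∈ S, ∀ f g : H → ℂ,
      Continuous f → HasCompactSupport f → Continuous g → HasCompactSupport g →
      (inner ℂ (∫ h, f h • (ω h⁻¹ x) ∂μ) (∫ h, g h • (ω h⁻¹ y) ∂μ) : ℂ)
        = ∫ s, conj (f s) * (∫ t, (inner ℂ x (ω t y) : ℂ) * g (t⁻¹ * s) ∂μ) ∂μ :=
  stmt15_general μ ω hω_mul hω_one hω_unitary S hS_meas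
end
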